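/- The Hessian quadratic form of f is positive definite: for every integer d ≥ 1, every probability vector p ∈ ℝ^d with p_1 > 0, and every nonzero vector a ∈ ℝ^d, one has ∑_{i=1}^d ∑_{j=1}^d a_i·a_j·∫₀¹ 2·i·j·t^{i+j−2}·(−log(1−t))/p'(t)³ dt > 0. -/

import Mathlib

open MeasureTheory Real

/-- `p'(t) = ∑_{i=1}^d i·p_i·t^{i-1}`, where the probability vector `p : Fin d → ℝ`
has `p i` corresponding to degree `i + 1`. -/
noncomputable def pderiv {d : ℕ} (p : Fin d → ℝ) (t : ℝ) : ℝ :=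
  ∑ i : Fin d, ((i : ℕ) + 1 : ℝ) * p i * t ^ (i : ℕ)

lemma pderiv_ge {d : ℕ} (hd : 1 ≤ d) (p : Fin d → ℝ) (hp0 : ∀ i, 0 ≤ p i)
    {t : ℝ} (ht : 0 ≤ t) : p ⟨0, hd⟩ ≤ pderiv p t := by
  have := Finset.single_le_sum (f := fun i : Fin d => ((i : ℕ) + 1 : ℝ) * p i * t ^ (i : ℕ))
    (fun i _ => mul_nonneg (mul_nonneg (by positivity) (hp0 i)) (pow_nonneg ht _)) (Finset.mem_univ ⟨0, hd⟩)
  simpa [pderiv] using this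

lemma continuous_pderiv {d : ℕ} (p : Fin d → ℝ) : Continuous (pderiv p) := by
  unfold pderiv
  fun_prop

lemma neglog_integrable : IntegrableOn (fun t : ℝ => -Real.log (1 - t)) (Set.Ioo 0 1) := by
  have h : IntegrableOn (fun t : ℝ => -Real.log (1 - t)) (Set.Ioc 0 1) := by
    apply intervalIntegral.integrableOn_deriv_of_nonneg (g := fun t : ℝ => (1 - t) * Real.log (1 - t) + t)
    · exact ((continuous_mul_log.comp (continuous_const.sub continuous_id)).add
        continuous_id).continuousOn
    · intro x hx
      have hx1 : (1 : ℝ) - x ≠ 0 := by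
        have := hx.2; intro h; have := sub_eq_zero.mp h; linarith
      have hu : HasDerivAt (fun t : ℝ => 1 - t) (-1) x := by
        simpa using (hasDerivAt_id x).const_sub 1
      have hlog : HasDerivAt (fun t : ℝ => Real.log (1 - t)) (-1 / (1 - x)) x := hu.log hx1
      have hmul := hu.mul hlog
      have h2 := hmul.add (hasDerivAt_id x)
      refine h2.congr_deriv ?_
      field_simp
      ring
    · intro x hx
      simp only [neg_nonneg]
      exact Real.log_nonpos (by linarith [hx.1, hx.2]) (by linarith [hx.1, hx.2])
  exact h.mono_set Set.Ioo_subset_Ioc_self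

theorem stmt_5 (d : ℕ) (hd : 1 ≤ d) (p : Fin d → ℝ)
    (hp0 : ∀ i, 0 ≤ p i) (hp1 : ∑ i, p i = 1) (hp : 0 < p ⟨0, hd⟩)
    (a : Fin d → ℝ) (ha : a ≠ 0) :
    0 < ∑ i : Fin d, ∑ j : Fin d, a i * a j *
        ∫ t in Set.Ioo (0 : ℝ) 1,
          2 * ((i : ℕ) + 1 : ℝ) * ((j : ℕ) + 1 : ℝ) * t ^ ((i : ℕ) + (j : ℕ)) *
            (-Real.log (1 - t)) / (pderiv p t) ^ 3 := by
  set F : Fin d → Fin d → ℝ → ℝ := fun i j t =>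
    2 * ((i : ℕ) + 1 : ℝ) * ((j : ℕ) + 1 : ℝ) * t ^ ((i : ℕ) + (j : ℕ)) *
      (-Real.log (1 - t)) / (pderiv p t) ^ 3 with hF
  have hPpos : ∀ t : ℝ, 0 ≤ t → 0 < pderiv p t := fun t ht =>
    lt_of_lt_of_le hp (pderiv_ge hd p hp0 ht)
  have hL : ∀ t ∈ Set.Ioo (0:ℝ) 1, 0 ≤ -Real.log (1 - t) := fun t ht => by
    simp only [neg_nonneg]
    exact Real.log_nonpos (by linarith [ht.2]) (by linarith [ht.1])
  -- integrability of each F i j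
  have hFint : ∀ i j : Fin d, IntegrableOn (F i j) (Set.Ioo 0 1) := by
    intro i j
    apply Integrable.mono'
      (g := fun t => (2 * ((i : ℕ) + 1 : ℝ) * ((j : ℕ) + 1 : ℝ) / p ⟨0, hd⟩ ^ 3)
        * (-Real.log (1 - t)))
      (neglog_integrable.const_mul _)
    · apply ContinuousOn.aestronglyMeasurable _ measurableSet_Ioo
      apply ContinuousOn.div
      · apply ContinuousOn.mul
        · fun_prop
        · apply ContinuousOn.neg
          apply ContinuousOn.log (by fun_prop)
          intro t ht h
          have := sub_eq_zero.mp h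
          have := ht.2
          linarith
      · exact ((continuous_pderiv p).pow 3).continuousOn
      · intro t ht
        exact pow_ne_zero 3 (ne_of_gt (hPpos t (le_of_lt ht.1)))
    · filter_upwards [ae_restrict_mem measurableSet_Ioo] with t ht
      have hLt := hL t ht
      have hPt := hPpos t (le_of_lt ht.1)
      have hP3 : (0:ℝ) < pderiv p t ^ 3 := by positivity
      have htnn : (0:ℝ) ≤ t := le_of_lt ht.1
      have hFnn : 0 ≤ F i j t := by
        apply div_nonneg _ (le_of_lt hP3)
        positivity
      rw [Real.norm_eq_abs, abs_of_nonneg hFnn]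
      have htpow : t ^ ((i:ℕ) + (j:ℕ)) ≤ 1 := pow_le_one₀ htnn (le_of_lt ht.2)
      have hple : p ⟨0, hd⟩ ^ 3 ≤ pderiv p t ^ 3 :=
        pow_le_pow_left₀ (le_of_lt hp) (pderiv_ge hd p hp0 htnn) 3
      calc F i j t = 2 * ((i : ℕ) + 1 : ℝ) * ((j : ℕ) + 1 : ℝ) * t ^ ((i : ℕ) + (j : ℕ)) *
            (-Real.log (1 - t)) / (pderiv p t) ^ 3 := rfl
        _ ≤ 2 * ((i : ℕ) + 1 : ℝ) * ((j : ℕ) + 1 : ℝ) * 1 *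
            (-Real.log (1 - t)) / p ⟨0, hd⟩ ^ 3 := by
            gcongr <;> first | assumption | positivity
        _ = (2 * ((i : ℕ) + 1 : ℝ) * ((j : ℕ) + 1 : ℝ) / p ⟨0, hd⟩ ^ 3)
            * (-Real.log (1 - t)) := by ring
  -- the combined integrand
  set h : ℝ → ℝ := fun t => 2 * (-Real.log (1 - t)) / (pderiv p t) ^ 3 *
    (∑ i : Fin d, a i * ((i : ℕ) + 1 : ℝ) * t ^ (i : ℕ)) ^ 2 with hh
  have hpt : ∀ t : ℝ, (∑ i : Fin d, ∑ j : Fin d, a i * a j * F i j t) = h t := by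
    intro t
    show _ = 2 * (-Real.log (1 - t)) / (pderiv p t) ^ 3 *
      (∑ i : Fin d, a i * ((i : ℕ) + 1 : ℝ) * t ^ (i : ℕ)) ^ 2
    rw [sq, Finset.sum_mul_sum, Finset.mul_sum]
    apply Finset.sum_congr rfl
    intro i _
    rw [Finset.mul_sum]
    apply Finset.sum_congr rfl
    intro j _
    simp only [hF]
    rw [pow_add]
    ring
  -- swap sum and integral
  have hswap : (∑ i : Fin d, ∑ j : Fin d, a i * a j * ∫ t in Set.Ioo (0:ℝ) 1, F i j t)
      = ∫ t in Set.Ioo (0:ℝ) 1, h t := by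
    have h1 : ∀ i j : Fin d, a i * a j * ∫ t in Set.Ioo (0:ℝ) 1, F i j t
        = ∫ t in Set.Ioo (0:ℝ) 1, a i * a j * F i j t := fun i j =>
      (integral_const_mul _ _).symm
    simp_rw [h1]
    have h2 : ∀ i : Fin d, (∑ j : Fin d, ∫ t in Set.Ioo (0:ℝ) 1, a i * a j * F i j t)
        = ∫ t in Set.Ioo (0:ℝ) 1, ∑ j : Fin d, a i * a j * F i j t := fun i =>
      (integral_finset_sum _ (fun j _ => ((hFint i j).const_mul _))).symm
    simp_rw [h2]
    rw [← integral_finset_sum _ (fun i _ => integrable_finset_sum _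
      (fun j _ => ((hFint i j).const_mul _)))]
    exact setIntegral_congr_fun measurableSet_Ioo (fun t _ => hpt t)
  rw [hswap]
  -- integrability of h
  have hhint : IntegrableOn h (Set.Ioo 0 1) := by
    have : h = fun t => ∑ i : Fin d, ∑ j : Fin d, a i * a j * F i j t :=
      funext fun t => (hpt t).symm
    rw [this]
    exact integrable_finset_sum _ (fun i _ => integrable_finset_sum _
      (fun j _ => ((hFint i j).const_mul _)))
  -- positivity
  rw [setIntegral_pos_iff_support_of_nonneg_ae]
  · -- measure of support
    obtain ⟨i0, hi0'⟩ := Function.ne_iff.mp ha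
    have hi0 : a i0 ≠ 0 := by simpa using hi0'
    set P : Polynomial ℝ := ∑ i : Fin d, Polynomial.C (a i * ((i : ℕ) + 1 : ℝ))
      * Polynomial.X ^ (i : ℕ) with hPdef
    have hPne : P ≠ 0 := by
      intro hP0
      have hc : P.coeff (i0 : ℕ) = a i0 * ((i0 : ℕ) + 1 : ℝ) := by
        rw [hPdef, Polynomial.finset_sum_coeff]
        rw [Finset.sum_eq_single i0]
        · rw [Polynomial.coeff_C_mul, Polynomial.coeff_X_pow, if_pos rfl, mul_one]
        · intro j _ hji
          have hne : ¬((i0 : ℕ) = (j : ℕ)) := fun h' => hji (Fin.ext h'.symm)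
          rw [Polynomial.coeff_C_mul, Polynomial.coeff_X_pow, if_neg hne, mul_zero]
        · intro hni; exact absurd (Finset.mem_univ i0) hni
      rw [hP0] at hc
      simp only [Polynomial.coeff_zero] at hc
      have : a i0 * ((i0 : ℕ) + 1 : ℝ) ≠ 0 := by
        apply mul_ne_zero hi0
        positivity
      exact this hc.symm
    have hZfin : {x : ℝ | P.IsRoot x}.Finite := Polynomial.finite_setOf_isRoot hPne
    have hZ0 : volume {x : ℝ | P.IsRoot x} = 0 := hZfin.measure_zero volume
    have hsub : Set.Ioo (0:ℝ) 1 \ {x : ℝ | P.IsRoot x} ⊆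
        Function.support h ∩ Set.Ioo 0 1 := by
      intro t ⟨ht, htZ⟩
      refine ⟨?_, ht⟩
      have hgt : (∑ i : Fin d, a i * ((i : ℕ) + 1 : ℝ) * t ^ (i : ℕ)) ≠ 0 := by
        intro hg0
        apply htZ
        show P.eval t = 0
        rw [hPdef]
        simp only [Polynomial.eval_finset_sum, Polynomial.eval_mul, Polynomial.eval_C,
          Polynomial.eval_pow, Polynomial.eval_X]
        exact hg0
      have hLt : 0 < -Real.log (1 - t) := by
        have : Real.log (1 - t) < 0 := Real.log_neg (by linarith [ht.2]) (by linarith [ht.1])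
        linarith
      have hPt := hPpos t (le_of_lt ht.1)
      rw [Function.mem_support, hh]
      have : 0 < 2 * (-Real.log (1 - t)) / pderiv p t ^ 3 *
          (∑ i : Fin d, a i * ((i : ℕ) + 1 : ℝ) * t ^ (i : ℕ)) ^ 2 := by positivity
      exact ne_of_gt this
    calc (0 : ENNReal) < volume (Set.Ioo (0:ℝ) 1) := by
          rw [Real.volume_Ioo]; norm_num
      _ = volume (Set.Ioo (0:ℝ) 1 \ {x : ℝ | P.IsRoot x}) := (measure_diff_null hZ0).symm
      _ ≤ volume (Function.support h ∩ Set.Ioo 0 1) := measure_mono hsub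
  · filter_upwards [ae_restrict_mem measurableSet_Ioo] with t ht
    have hLt := hL t ht
    have hPt := hPpos t (le_of_lt ht.1)
    rw [hh]
    positivity
  · exact hhint
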